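/- arXiv:2105.08522 — 4 statements merged into one kernel-verified Lean document; each statement's English description precedes it below -/
import Mathlib

section
/- Let $\mu$ be a positive Borel measure on $[0,1]$ and suppose there exists $\gamma > 0$ such that $\mu([1-x,1]) \le \gamma x$ for all $x \in [0,1]$. Then the moment sequence $c_j = \int_0^1 x^j\, d\mu(x)$ satisfies $c_j \le \gamma/(j+1)$ for all $j \ge 1$. -/
/-!
By the layer-cake formula, `∫ x^j dμ = ∫₀¹ j t^(j-1) μ([t,1]) dt` for a measure on `[0,1]`.
The hypothesis bounds `μ([t,1])` by `γ (1 - t)`, and `∫₀¹ (1 - t) j t^(j-1) dt = 1/(j+1)`.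
-/

open MeasureTheory Set
open scoped ENNReal

theorem integral_mul_pow_pred {j : ℕ} (hj : 0 < j) (x : ℝ) :
    ∫ t in (0:ℝ)..x, (j : ℝ) * t ^ (j - 1) = x ^ j := by
  obtain ⟨n, rfl⟩ := Nat.exists_eq_add_one_of_ne_zero hj.ne'
  rw [intervalIntegral.integral_const_mul, Nat.add_sub_cancel, integral_pow]
  push_cast
  field_simp
  simp

theorem setLIntegral_Icc_pow_eq_lintegral_meas_Icc_mul (μ : Measure ℝ) {j : ℕ} (hj : 0 < j) :
    ∫⁻ x in Icc (0:ℝ) 1, ENNReal.ofReal (x ^ j) ∂μ =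
      ∫⁻ t in Ioc (0:ℝ) 1, μ (Icc t 1) * ENNReal.ofReal (j * t ^ (j - 1)) := by
  have hg : ∀ t > (0:ℝ), IntervalIntegrable (fun t : ℝ => (j : ℝ) * t ^ (j - 1)) volume 0 t :=
    fun t _ => (by fun_prop : Continuous _).intervalIntegrable _ _
  have hg_nn : ∀ᵐ t ∂volume.restrict (Ioi (0:ℝ)), 0 ≤ (j : ℝ) * t ^ (j - 1) := by
    filter_upwards [ae_restrict_mem measurableSet_Ioi] with t ht
    exact mul_nonneg j.cast_nonneg (pow_nonneg ht.le _)
  have hf_nn : 0 ≤ᵐ[μ.restrict (Icc 0 1)] id := by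
    filter_upwards [ae_restrict_mem measurableSet_Icc] with x hx using hx.1
  have hlayer := lintegral_comp_eq_lintegral_meas_le_mul (μ.restrict (Icc 0 1)) hf_nn
    aemeasurable_id hg hg_nn
  simp only [integral_mul_pow_pred hj, id] at hlayer
  have hsuper : ∀ t ∈ Ioi (0:ℝ), μ.restrict (Icc 0 1) {x | t ≤ x} = μ (Icc t 1) := by
    intro t ht
    rw [Measure.restrict_apply' measurableSet_Icc]
    exact congrArg μ <| Set.ext fun x =>
      ⟨fun h => ⟨h.1, h.2.2⟩, fun h => ⟨h.1, (mem_Ioi.mp ht).le.trans h.1, h.2⟩⟩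
  have htail : ∫⁻ t in Ioi 1, μ (Icc t 1) * ENNReal.ofReal (j * t ^ (j - 1)) = 0 :=
    setLIntegral_eq_zero measurableSet_Ioi fun t (ht : 1 < t) => by
      simp [Icc_eq_empty_of_lt ht]
  rw [hlayer, setLIntegral_congr_fun measurableSet_Ioi (fun t ht => by rw [hsuper t ht]),
    ← Ioc_union_Ioi_eq_Ioi zero_le_one,
    lintegral_union measurableSet_Ioi (Ioc_disjoint_Ioi le_rfl), htail, add_zero]

theorem integral_one_sub_mul_mul_pow_pred {j : ℕ} (hj : 0 < j) :
    ∫ t in (0:ℝ)..1, (1 - t) * (j * t ^ (j - 1)) = 1 / (j + 1) := by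
  obtain ⟨n, rfl⟩ := Nat.exists_eq_add_one_of_ne_zero hj.ne'
  have hsplit : ∀ t : ℝ, (1 - t) * ((n + 1 : ℕ) * t ^ (n + 1 - 1)) =
      (n + 1) * t ^ n - (n + 1) * t ^ (n + 1) := fun t => by push_cast; ring
  simp only [hsplit]
  rw [intervalIntegral.integral_sub ((by fun_prop : Continuous _).intervalIntegrable _ _)
    ((by fun_prop : Continuous _).intervalIntegrable _ _), intervalIntegral.integral_const_mul,
    intervalIntegral.integral_const_mul, integral_pow, integral_pow]
  push_cast
  field_simp
  ring

theorem setLIntegral_Icc_pow_le_of_meas_Icc_le (μ : Measure ℝ) (C : ℝ≥0∞)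
    (h : ∀ x ∈ Icc (0:ℝ) 1, μ (Icc (1 - x) 1) ≤ C * ENNReal.ofReal x) {j : ℕ} (hj : 0 < j) :
    ∫⁻ x in Icc (0:ℝ) 1, ENNReal.ofReal (x ^ j) ∂μ ≤ C * ENNReal.ofReal (1 / (j + 1)) := by
  have hnn : ∀ t ∈ Ioc (0:ℝ) 1, 0 ≤ (1 - t) * (j * t ^ (j - 1)) := fun t ht =>
    mul_nonneg (sub_nonneg.2 ht.2) (mul_nonneg j.cast_nonneg (pow_nonneg ht.1.le _))
  calc ∫⁻ x in Icc (0:ℝ) 1, ENNReal.ofReal (x ^ j) ∂μ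
      = ∫⁻ t in Ioc (0:ℝ) 1, μ (Icc t 1) * ENNReal.ofReal (j * t ^ (j - 1)) :=
        setLIntegral_Icc_pow_eq_lintegral_meas_Icc_mul μ hj
    _ ≤ ∫⁻ t in Ioc (0:ℝ) 1, C * ENNReal.ofReal ((1 - t) * (j * t ^ (j - 1))) := by
        refine setLIntegral_mono' measurableSet_Ioc fun t ht => ?_
        rw [ENNReal.ofReal_mul (sub_nonneg.2 ht.2), ← mul_assoc]
        gcongr
        simpa using h (1 - t) ⟨by linarith [ht.2], by linarith [ht.1]⟩
    _ = C * ∫⁻ t in Ioc (0:ℝ) 1, ENNReal.ofReal ((1 - t) * (j * t ^ (j - 1))) :=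
        lintegral_const_mul C (by fun_prop)
    _ = C * ENNReal.ofReal (1 / (j + 1)) := by
        rw [← integral_one_sub_mul_mul_pow_pred hj, intervalIntegral.integral_of_le zero_le_one,
          ofReal_integral_eq_lintegral_ofReal]
        · exact (by fun_prop : Continuous _).integrableOn_Ioc
        · filter_upwards [ae_restrict_mem measurableSet_Ioc] using hnn

theorem widom_c_implies_b_general
    (μ : Measure ℝ)
    (γ : ℝ)
    (hbound : ∀ x ∈ Icc (0:ℝ) 1, μ (Icc (1 - x) 1) ≤ ENNReal.ofReal (γ * x)) :
    ∀ j : ℕ, 1 ≤ j →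
      ∫⁻ x in Icc (0:ℝ) 1, ENNReal.ofReal (x ^ j) ∂μ
        ≤ ENNReal.ofReal (γ / (j + 1)) := by
  intro j hj
  have hbound_mul : ∀ x ∈ Icc (0:ℝ) 1, μ (Icc (1 - x) 1) ≤ ENNReal.ofReal γ * ENNReal.ofReal x :=
    fun x hx => ENNReal.ofReal_mul' hx.1 ▸ hbound x hx
  rw [div_eq_mul_one_div, ENNReal.ofReal_mul' (by positivity)]
  exact setLIntegral_Icc_pow_le_of_meas_Icc_le μ _ hbound_mul hj

/-- If `μ([1-x,1]) ≤ γ x` for all `x ∈ [0,1]`, then the moments satisfy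
`c_j = ∫₀¹ x^j dμ(x) ≤ γ/(j+1)` for `j ≥ 1`. -/
theorem widom_c_implies_b
    (μ : Measure ℝ) (hsupp : μ (Icc (0:ℝ) 1)ᶜ = 0)
    (γ : ℝ) (hγ : 0 < γ)
    (hbound : ∀ x ∈ Icc (0:ℝ) 1, μ (Icc (1 - x) 1) ≤ ENNReal.ofReal (γ * x)) :
    ∀ j : ℕ, 1 ≤ j →
      ∫⁻ x in Icc (0:ℝ) 1, ENNReal.ofReal (x ^ j) ∂μ
        ≤ ENNReal.ofReal (γ / (j + 1)) :=
  widom_c_implies_b_general μ γ hbound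
end

section
/- Let $\mu$ be a finite positive Borel measure on $[0,1]$ with moments $c_j = \int_0^1 x^j\,d\mu(x)$ satisfying $c_n \le \beta/(n+1)$ for all $n \ge 0$ and some $\beta > 0$. Then for every square-summable sequence $(a_n)_{n \ge 0}$ of complex numbers, $\left|\sum_{n,m \ge 0} c_{n+m} \overline{a_n} a_m\right| \le \beta \pi \sum_{n \ge 0} |a_n|^2$. -/
open MeasureTheory Set Real
open scoped ComplexConjugate

/-!
Since `0 ≤ c_{n+m} ≤ β / (n + m + 1)`, the form `∑ c_{n+m} conj(a_n) a_m` is dominated termwise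
by `β` times Hilbert's form `∑ |a_n| |a_m| / (n + m + 1)`, which is at most `π ∑ |a_n|²`.
Hilbert's inequality is the Schur test with weights `w_n = (n + 1/2)^(-1/2)`: writing
`n + m + 1 = (n + 1/2) + (m + 1/2)`, convexity of `f t = 1 / ((c + t) √t)` gives
`f (m + 1/2) ≤ ∫_m^{m+1} f`, so the row sums `∑_m w_m / (c + m + 1/2)` are at most
`∫_0^∞ dt / ((c + t) √t) = π / √c`.
-/

theorem ConvexOn.sub_mul_map_midpoint_le_intervalIntegral {f : ℝ → ℝ} {a b : ℝ} (hab : a ≤ b)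
    (hf : ConvexOn ℝ (Ioo a b) f) (hint : IntervalIntegrable f volume a b) :
    (b - a) * f ((a + b) / 2) ≤ ∫ x in a..b, f x := by
  have hint' : IntervalIntegrable (fun x => f (a + b - x)) volume a b := by
    simpa using (hint.comp_sub_left (a + b)).symm
  have hreflect : ∫ x in a..b, f (a + b - x) = ∫ x in a..b, f x := by
    rw [intervalIntegral.integral_comp_sub_left, add_sub_cancel_right, add_sub_cancel_left]
  have hmid : ∀ x ∈ Ioo a b, 2 * f ((a + b) / 2) ≤ f x + f (a + b - x) := by
    intro x hx
    have hx' : a + b - x ∈ Ioo a b := ⟨by linarith [hx.2], by linarith [hx.1]⟩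
    have := hf.2 hx hx' (by norm_num : (0 : ℝ) ≤ 1 / 2) (by norm_num : (0 : ℝ) ≤ 1 / 2)
      (by norm_num)
    rw [smul_eq_mul, smul_eq_mul, smul_eq_mul, smul_eq_mul,
      show 1 / 2 * x + 1 / 2 * (a + b - x) = (a + b) / 2 by ring] at this
    linarith
  have := intervalIntegral.integral_mono_on_of_le_Ioo hab intervalIntegrable_const
    (hint.add hint') hmid
  rw [intervalIntegral.integral_const, intervalIntegral.integral_add hint hint', hreflect,
    smul_eq_mul] at this
  linarith

lemma convexOn_inv_sqrt : ConvexOn ℝ (Ioi 0) fun t : ℝ => (√t)⁻¹ := by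
  have himage : Real.sqrt '' Ioi 0 = Ioi 0 := by
    ext y
    refine ⟨?_, fun hy => ⟨y ^ 2, show 0 < y ^ 2 from pow_pos hy 2, sqrt_sq hy.le⟩⟩
    rintro ⟨x, hx, rfl⟩
    exact sqrt_pos.2 hx
  have hinv : ConvexOn ℝ (Real.sqrt '' Ioi 0) fun x : ℝ => x⁻¹ := by
    simpa [himage] using convexOn_zpow (𝕜 := ℝ) (-1)
  refine hinv.comp_concaveOn
    (strictConcaveOn_sqrt.concaveOn.subset Ioi_subset_Ici_self (convex_Ioi 0)) ?_
  rw [himage]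
  exact fun x hx y _ hxy => inv_anti₀ hx hxy

lemma convexOn_inv_add_mul_inv_sqrt {c : ℝ} (hc : 0 ≤ c) :
    ConvexOn ℝ (Ioi 0) fun t : ℝ => (c + t)⁻¹ * (√t)⁻¹ := by
  have hshift : ConvexOn ℝ (Ioi 0) fun t : ℝ => (c + t)⁻¹ := by
    refine ((convexOn_zpow (𝕜 := ℝ) (-1)).translate_right c).subset
      (fun t (ht : 0 < t) => show 0 < c + t by linarith) (convex_Ioi 0) |>.congr ?_
    intro t _
    simp
  refine hshift.mul convexOn_inv_sqrt (fun t (ht : 0 < t) => by positivity)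
    (fun t _ => by positivity) (AntitoneOn.monovaryOn ?_ ?_)
  · exact fun x (hx : 0 < x) y _ hxy => inv_anti₀ (by positivity) (by linarith)
  · exact fun x hx y _ hxy => inv_anti₀ (sqrt_pos.2 hx) (sqrt_le_sqrt hxy)

lemma hasDerivAt_arctan_sqrt_div_sqrt {c t : ℝ} (hc : 0 < c) (ht : 0 < t) :
    HasDerivAt (fun s => 2 / √c * arctan (√s / √c)) ((c + t)⁻¹ * (√t)⁻¹) t := by
  refine ((((hasDerivAt_sqrt ht.ne').div_const √c).arctan).const_mul (2 / √c)).congr_deriv ?_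
  have hsc : 0 < √c := sqrt_pos.2 hc
  have hst : 0 < √t := sqrt_pos.2 ht
  rw [div_pow, sq_sqrt ht.le, sq_sqrt hc.le]
  field_simp
  rw [sq_sqrt hc.le]

lemma sum_range_inv_add_mul_inv_sqrt_le {c : ℝ} (hc : 0 < c) (N : ℕ) :
    ∑ m ∈ Finset.range N, (c + (m + 1 / 2))⁻¹ * (√(m + 1 / 2))⁻¹ ≤ π / √c := by
  set F : ℝ → ℝ := fun s => 2 / √c * arctan (√s / √c)
  have hcell (m : ℕ) : (c + (m + 1 / 2))⁻¹ * (√(m + 1 / 2))⁻¹ ≤ F (m + 1) - F m := by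
    have hm : (m : ℝ) ≤ m + 1 := by linarith
    have hderiv : ∀ t ∈ Ioo (m : ℝ) (m + 1), HasDerivAt F ((c + t)⁻¹ * (√t)⁻¹) t :=
      fun t ht => hasDerivAt_arctan_sqrt_div_sqrt hc (m.cast_nonneg.trans_lt ht.1)
    have hcont : ContinuousOn F (Icc m (m + 1)) := by fun_prop
    have hint : IntervalIntegrable (fun t => (c + t)⁻¹ * (√t)⁻¹) volume m (m + 1) :=
      (intervalIntegrable_iff_integrableOn_Ioc_of_le hm).2 <|
        intervalIntegral.integrableOn_deriv_of_nonneg hcont hderiv fun t ht => by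
          have : 0 < t := m.cast_nonneg.trans_lt ht.1
          positivity
    have hconv : ConvexOn ℝ (Ioo (m : ℝ) (m + 1)) fun t => (c + t)⁻¹ * (√t)⁻¹ :=
      (convexOn_inv_add_mul_inv_sqrt hc.le).subset (fun t ht => m.cast_nonneg.trans_lt ht.1)
        (convex_Ioo _ _)
    have := hconv.sub_mul_map_midpoint_le_intervalIntegral hm hint
    rwa [intervalIntegral.integral_eq_sub_of_hasDerivAt_of_le hm hcont hderiv hint,
      add_sub_cancel_left, one_mul, show ((m : ℝ) + (m + 1)) / 2 = m + 1 / 2 by ring] at this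
  have hF0 : F 0 = 0 := by simp [F]
  calc ∑ m ∈ Finset.range N, (c + (m + 1 / 2))⁻¹ * (√(m + 1 / 2))⁻¹
      ≤ ∑ m ∈ Finset.range N, (F ((m + 1 : ℕ) : ℝ) - F (m : ℝ)) :=
        Finset.sum_le_sum fun m _ => by simpa using hcell m
    _ = F N - F 0 := by simpa using Finset.sum_range_sub (fun m : ℕ => F m) N
    _ ≤ π / √c := by
        rw [hF0, sub_zero]
        have hsc : 0 < √c := sqrt_pos.2 hc
        calc F N = 2 / √c * arctan (√N / √c) := rfl
          _ ≤ 2 / √c * (π / 2) := by gcongr; exact (arctan_lt_pi_div_two _).le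
          _ = π / √c := by ring

lemma abs_mul_mul_le_weighted {k a b s t : ℝ} (hk : 0 ≤ k) (hs : 0 < s) (ht : 0 < t) :
    |k * a * b| ≤ (a ^ 2 / s * (k * t) + b ^ 2 / t * (k * s)) / 2 := by
  have hamgm : 2 * |a| * |b| ≤ a ^ 2 * t / s + b ^ 2 * s / t := by
    rw [div_add_div _ _ hs.ne' ht.ne', le_div_iff₀ (by positivity), ← sq_abs a, ← sq_abs b]
    nlinarith [sq_nonneg (|a| * t - |b| * s)]
  rw [abs_mul, abs_mul, abs_of_nonneg hk]
  calc k * |a| * |b| = k * (2 * |a| * |b|) / 2 := by ring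
    _ ≤ k * (a ^ 2 * t / s + b ^ 2 * s / t) / 2 := by gcongr
    _ = _ := by ring

theorem schur_test {ι : Type*} {K : ι → ι → ℝ} {w : ι → ℝ} {C : ℝ}
    (hK : ∀ i j, 0 ≤ K i j) (hK_symm : ∀ i j, K i j = K j i) (hw : ∀ i, 0 < w i)
    (hrow : ∀ i, Summable fun j => K i j * w j) (hrow_le : ∀ i, ∑' j, K i j * w j ≤ C * w i)
    {x : ι → ℝ} (hx : Summable fun i => x i ^ 2) :
    Summable (fun p : ι × ι => K p.1 p.2 * x p.1 * x p.2) ∧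
      ∑' p : ι × ι, K p.1 p.2 * x p.1 * x p.2 ≤ C * ∑' i, x i ^ 2 := by
  set u : ι × ι → ℝ := fun p => x p.1 ^ 2 / w p.1 * (K p.1 p.2 * w p.2)
  have hu : 0 ≤ u := fun p => mul_nonneg (div_nonneg (sq_nonneg _) (hw _).le)
    (mul_nonneg (hK _ _) (hw _).le)
  have hu_row (i : ι) : Summable fun j => u (i, j) := (hrow i).mul_left (x i ^ 2 / w i)
  have hu_row_le (i : ι) : ∑' j, u (i, j) ≤ C * x i ^ 2 := by
    calc ∑' j, u (i, j) = x i ^ 2 / w i * ∑' j, K i j * w j :=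
          tsum_mul_left (a := x i ^ 2 / w i) (f := fun j => K i j * w j)
      _ ≤ x i ^ 2 / w i * (C * w i) :=
          mul_le_mul_of_nonneg_left (hrow_le i) (div_nonneg (sq_nonneg _) (hw i).le)
      _ = C * x i ^ 2 := by field_simp [(hw i).ne']
  have hu_rows_summable : Summable fun i => ∑' j, u (i, j) :=
    .of_nonneg_of_le (fun i => tsum_nonneg fun j => hu (i, j)) hu_row_le (hx.mul_left C)
  have hu_summable : Summable u := (summable_prod_of_nonneg hu).2 ⟨hu_row, hu_rows_summable⟩
  have hu_tsum_le : ∑' p, u p ≤ C * ∑' i, x i ^ 2 := by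
    rw [hu_summable.tsum_prod' hu_row, ← tsum_mul_left]
    exact hu_rows_summable.tsum_le_tsum hu_row_le (hx.mul_left C)
  have hdom (p : ι × ι) : |K p.1 p.2 * x p.1 * x p.2| ≤ (u p + u p.swap) / 2 := by
    simpa [u, hK_symm p.2 p.1] using abs_mul_mul_le_weighted (hK p.1 p.2) (hw p.1) (hw p.2)
  have hdom_summable : Summable fun p : ι × ι => (u p + u p.swap) / 2 :=
    (hu_summable.add hu_summable.prod_symm).div_const 2
  have hsummable : Summable fun p : ι × ι => K p.1 p.2 * x p.1 * x p.2 :=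
    .of_norm_bounded hdom_summable hdom
  refine ⟨hsummable, ?_⟩
  calc ∑' p : ι × ι, K p.1 p.2 * x p.1 * x p.2 ≤ ∑' p : ι × ι, (u p + u p.swap) / 2 :=
        hsummable.tsum_le_tsum (fun p => (le_abs_self _).trans (hdom p)) hdom_summable
    _ = ∑' p, u p := by
        have hswap : ∑' p : ι × ι, u p.swap = ∑' p, u p := (Equiv.prodComm ι ι).tsum_eq u
        rw [tsum_div_const, hu_summable.tsum_add hu_summable.prod_symm, hswap]
        ring
    _ ≤ C * ∑' i, x i ^ 2 := hu_tsum_le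

theorem hilbert_inequality {x : ℕ → ℝ} (hx : Summable fun n => x n ^ 2) :
    Summable (fun p : ℕ × ℕ => ((p.1 : ℝ) + p.2 + 1)⁻¹ * x p.1 * x p.2) ∧
      ∑' p : ℕ × ℕ, ((p.1 : ℝ) + p.2 + 1)⁻¹ * x p.1 * x p.2 ≤ π * ∑' n, x n ^ 2 := by
  have hrow (n N : ℕ) :
      ∑ m ∈ Finset.range N, ((n : ℝ) + m + 1)⁻¹ * (√(m + 1 / 2))⁻¹ ≤ π * (√(n + 1 / 2))⁻¹ := by
    convert sum_range_inv_add_mul_inv_sqrt_le (c := n + 1 / 2) (by positivity) N using 3 <;> ring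
  exact schur_test (fun _ _ => by positivity) (fun n m => by ring_nf) (fun n => by positivity)
    (fun n => summable_of_sum_range_le (fun m => by positivity) (hrow n))
    (fun n => Real.tsum_le_of_sum_range_le (fun m => by positivity) (hrow n)) hx

theorem widom_b_implies_a_general
    (μ : Measure ℝ)
    (β : ℝ)
    (hmom : ∀ n : ℕ, (∫ x in Icc (0:ℝ) 1, x ^ n ∂μ) ≤ β / (n + 1))
    (a : ℕ → ℂ) (ha : Summable fun n => ‖a n‖ ^ 2) :
    ‖∑' p : ℕ × ℕ,
        ((∫ x in Icc (0:ℝ) 1, x ^ (p.1 + p.2) ∂μ : ℝ) : ℂ) * conj (a p.1) * a p.2‖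
      ≤ β * Real.pi * ∑' n : ℕ, ‖a n‖ ^ 2 := by
  set c : ℕ → ℝ := fun j => ∫ x in Icc (0:ℝ) 1, x ^ j ∂μ
  have hc (j : ℕ) : 0 ≤ c j := setIntegral_nonneg measurableSet_Icc fun x hx => pow_nonneg hx.1 j
  have hβ : 0 ≤ β := by simpa using (hc 0).trans (hmom 0)
  obtain ⟨hH, hH_le⟩ := hilbert_inequality (x := fun n => ‖a n‖) ha
  have hterm (p : ℕ × ℕ) : ‖(c (p.1 + p.2) : ℂ) * conj (a p.1) * a p.2‖
      ≤ β * (((p.1 : ℝ) + p.2 + 1)⁻¹ * ‖a p.1‖ * ‖a p.2‖) := by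
    have hmom_p : c (p.1 + p.2) ≤ β / ((p.1 : ℝ) + p.2 + 1) := by exact_mod_cast hmom (p.1 + p.2)
    rw [norm_mul, norm_mul, Complex.norm_real, Real.norm_of_nonneg (hc _), Complex.norm_conj]
    calc c (p.1 + p.2) * ‖a p.1‖ * ‖a p.2‖ ≤ β / ((p.1 : ℝ) + p.2 + 1) * ‖a p.1‖ * ‖a p.2‖ := by
          gcongr
      _ = _ := by ring
  have hsummable := Summable.of_nonneg_of_le (fun p => norm_nonneg _) hterm (hH.mul_left β)
  calc ‖∑' p : ℕ × ℕ, (c (p.1 + p.2) : ℂ) * conj (a p.1) * a p.2‖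
      ≤ ∑' p : ℕ × ℕ, ‖(c (p.1 + p.2) : ℂ) * conj (a p.1) * a p.2‖ :=
        norm_tsum_le_tsum_norm hsummable
    _ ≤ ∑' p : ℕ × ℕ, β * (((p.1 : ℝ) + p.2 + 1)⁻¹ * ‖a p.1‖ * ‖a p.2‖) :=
        hsummable.tsum_le_tsum hterm (hH.mul_left β)
    _ ≤ β * (π * ∑' n, ‖a n‖ ^ 2) := by
        rw [tsum_mul_left]
        exact mul_le_mul_of_nonneg_left hH_le hβ
    _ = β * π * ∑' n, ‖a n‖ ^ 2 := by ring

/-- Widom (b) ⇒ (a): if the moments `c_j = ∫₀¹ x^j dμ` satisfy `c_n ≤ β/(n+1)`,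
then for every square-summable complex sequence `a`,
`|∑_{n,m} c_{n+m} conj(a_n) a_m| ≤ β π ∑ |a_n|²`. -/
theorem widom_b_implies_a
    (μ : Measure ℝ) [IsFiniteMeasure μ] (hsupp : μ (Icc (0:ℝ) 1)ᶜ = 0)
    (β : ℝ) (hβ : 0 < β)
    (hmom : ∀ n : ℕ, (∫ x in Icc (0:ℝ) 1, x ^ n ∂μ) ≤ β / (n + 1))
    (a : ℕ → ℂ) (ha : Summable fun n => ‖a n‖ ^ 2) :
    ‖∑' p : ℕ × ℕ,
        ((∫ x in Icc (0:ℝ) 1, x ^ (p.1 + p.2) ∂μ : ℝ) : ℂ) * conj (a p.1) * a p.2‖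
      ≤ β * Real.pi * ∑' n : ℕ, ‖a n‖ ^ 2 :=
  widom_b_implies_a_general μ β hmom a ha
end

section
/- Let $\mu$ be a positive Borel measure on $\mathbb{R}_+ = (0,\infty)$ such that the measure $d\rho(\lambda) = d\mu(\lambda)/(1+\lambda^2)$ is finite and satisfies $\rho((0,\varepsilon]) \le \beta\varepsilon$ and $\rho([t,\infty)) \le \gamma/t$ for all $\varepsilon, t > 0$, for some constants $\beta, \gamma > 0$. Then the function $h(p) := \frac{1}{\pi}\int_{\mathbb{R}_+} \frac{p}{\lambda^2 + p^2}\, d\mu(\lambda)$, defined for $p > 0$, is bounded: for all $p > 0$, $|h(p)| \le \frac{1}{\pi}\rho(\mathbb{R}_+) + \frac{1}{2}\max\{\beta,\gamma\}$. -/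
/-! Since `p / (λ² + p²) = (1 + F_p(λ)) / (1 + λ²)` with `F_p = schoberKernel p`, it suffices to
bound `∫ F_p⁺ dρ` by `π max{β, γ} / 2`, where `ρ = schoberMeasure μ`. For `p ≥ 1`, `F_p`
increases on `(0, ∞)` from `F_p(0) ≤ 0`, so the layer-cake formula gives
`∫ F_p⁺ dρ ≤ ∫₀^∞ F_p'(t) ρ([t, ∞)) dt ≤ γ ∫₀^∞ F_p'(t) / t dt = πγ (1 - p⁻²) / 2`.
The case `p ≤ 1` reduces to this one under `λ ↦ λ⁻¹`, which exchanges the two conditions on `ρ`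
and satisfies `F_p(λ⁻¹) = F_{p⁻¹}(λ)`. -/

open MeasureTheory Set Filter Topology Real

noncomputable def schoberKernel (p l : ℝ) : ℝ := p * (1 + l ^ 2) / (l ^ 2 + p ^ 2) - 1

noncomputable def schoberMeasure (μ : Measure ℝ) : Measure ℝ :=
  (μ.restrict (Ioi 0)).withDensity fun l => ENNReal.ofReal (1 / (1 + l ^ 2))

lemma schoberKernel_inv {p l : ℝ} (hp : p ≠ 0) (hl : l ≠ 0) :
    schoberKernel p⁻¹ l⁻¹ = schoberKernel p l := by
  unfold schoberKernel
  field_simp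
  ring

lemma measurable_schoberKernel (p : ℝ) : Measurable (schoberKernel p) := by
  unfold schoberKernel; fun_prop

lemma hasDerivAt_schoberKernel {p : ℝ} (hp : p ≠ 0) (x : ℝ) :
    HasDerivAt (schoberKernel p) (2 * p * (p ^ 2 - 1) * x / (x ^ 2 + p ^ 2) ^ 2) x := by
  have hd : x ^ 2 + p ^ 2 ≠ 0 := by positivity
  have h := ((((hasDerivAt_pow 2 x).const_add 1).const_mul p).div
    ((hasDerivAt_pow 2 x).add_const (p ^ 2)) hd).sub_const 1
  refine h.congr_deriv ?_
  field_simp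
  ring

lemma schoberKernel_le_intervalIntegral {p : ℝ} (hp : 1 ≤ p) (l : ℝ) :
    schoberKernel p l ≤ ∫ t in 0..l, 2 * p * (p ^ 2 - 1) * t / (t ^ 2 + p ^ 2) ^ 2 := by
  have hp0 : p ≠ 0 := by positivity
  rw [intervalIntegral.integral_eq_sub_of_hasDerivAt (fun x _ => hasDerivAt_schoberKernel hp0 x)
    (Continuous.intervalIntegrable (by fun_prop (disch := intro; positivity)) _ _)]
  have : schoberKernel p 0 ≤ 0 := by
    rw [schoberKernel, div_sub_one (by positivity)]
    exact div_nonpos_of_nonpos_of_nonneg (by nlinarith) (by positivity)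
  linarith

lemma tendsto_div_sq_add_sq_atTop (p : ℝ) :
    Tendsto (fun x : ℝ => x / (x ^ 2 + p ^ 2)) atTop (𝓝 0) := by
  refine squeeze_zero' ?_ ?_ tendsto_inv_atTop_zero
  · filter_upwards [eventually_ge_atTop 0] with x hx; positivity
  · filter_upwards [eventually_gt_atTop 0] with x hx
    rw [div_le_iff₀ (by positivity), inv_mul_eq_div, le_div_iff₀ hx]
    nlinarith

lemma lintegral_Ioi_inv_sq_add_sq_sq {p : ℝ} (hp : 0 < p) :
    ∫⁻ x in Ioi 0, ENNReal.ofReal ((x ^ 2 + p ^ 2) ^ 2)⁻¹ = ENNReal.ofReal (π / (4 * p ^ 3)) := by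
  have hderiv : ∀ x ∈ Ici (0 : ℝ), HasDerivAt
      (fun x => x / (x ^ 2 + p ^ 2) / (2 * p ^ 2) + arctan (x / p) / (2 * p ^ 3))
      ((x ^ 2 + p ^ 2) ^ 2)⁻¹ x := by
    intro x _
    have hd : x ^ 2 + p ^ 2 ≠ 0 := by positivity
    refine ((((hasDerivAt_id x).div ((hasDerivAt_pow 2 x).add_const (p ^ 2)) hd).div_const
      (2 * p ^ 2)).add (((hasDerivAt_id x).div_const p).arctan.div_const (2 * p ^ 3))).congr_deriv ?_
    simp only [id]
    field_simp
    ring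
  have hnn : ∀ x ∈ Ioi (0 : ℝ), 0 ≤ ((x ^ 2 + p ^ 2) ^ 2)⁻¹ := fun x _ => by positivity
  have hlim : Tendsto (fun x => x / (x ^ 2 + p ^ 2) / (2 * p ^ 2) + arctan (x / p) / (2 * p ^ 3))
      atTop (𝓝 (0 / (2 * p ^ 2) + π / 2 / (2 * p ^ 3))) :=
    ((tendsto_div_sq_add_sq_atTop p).div_const _).add
      (((tendsto_nhds_of_tendsto_nhdsWithin tendsto_arctan_atTop).comp
        (tendsto_id.atTop_div_const hp)).div_const _)
  rw [← ofReal_integral_eq_lintegral_ofReal (integrableOn_Ioi_deriv_of_nonneg' hderiv hnn hlim)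
    ((ae_restrict_iff' measurableSet_Ioi).mpr (ae_of_all _ hnn)),
    integral_Ioi_of_hasDerivAt_of_nonneg' hderiv hnn hlim]
  congr 1
  simp only [zero_div, arctan_zero, add_zero, zero_add, sub_zero]
  field_simp
  ring

theorem lintegral_schoberKernel_le_of_tail {ρ : Measure ℝ} {γ p : ℝ} (hρ : ∀ᵐ l ∂ρ, 0 ≤ l)
    (htail : ∀ t, 0 < t → ρ (Ici t) ≤ ENNReal.ofReal (γ / t)) (hp : 1 ≤ p) :
    ∫⁻ l, ENNReal.ofReal (schoberKernel p l) ∂ρ ≤ ENNReal.ofReal (π * γ / 2) := by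
  have hp0 : 0 < p := by positivity
  set c := 2 * p * (p ^ 2 - 1)
  have hc : 0 ≤ c := mul_nonneg (by positivity) (by nlinarith)
  calc ∫⁻ l, ENNReal.ofReal (schoberKernel p l) ∂ρ
      ≤ ∫⁻ l, ENNReal.ofReal (∫ t in 0..id l, c * t / (t ^ 2 + p ^ 2) ^ 2) ∂ρ :=
        lintegral_mono fun l => ENNReal.ofReal_le_ofReal (schoberKernel_le_intervalIntegral hp l)
    _ = ∫⁻ t in Ioi 0, ρ {l | t ≤ id l} * ENNReal.ofReal (c * t / (t ^ 2 + p ^ 2) ^ 2) :=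
        lintegral_comp_eq_lintegral_meas_le_mul ρ hρ aemeasurable_id
          (fun _ _ => Continuous.intervalIntegrable (by fun_prop (disch := intro; positivity)) _ _)
          ((ae_restrict_iff' measurableSet_Ioi).mpr (ae_of_all _ fun t (ht : 0 < t) =>
            div_nonneg (mul_nonneg hc ht.le) (by positivity)))
    _ ≤ ∫⁻ t in Ioi 0, ENNReal.ofReal (γ * c) * ENNReal.ofReal ((t ^ 2 + p ^ 2) ^ 2)⁻¹ := by
        refine setLIntegral_mono' measurableSet_Ioi fun t (ht : 0 < t) => ?_
        calc ρ (Ici t) * ENNReal.ofReal (c * t / (t ^ 2 + p ^ 2) ^ 2)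
            ≤ ENNReal.ofReal (γ / t) * ENNReal.ofReal (c * t / (t ^ 2 + p ^ 2) ^ 2) := by
              gcongr; exact htail t ht
          _ = ENNReal.ofReal (γ * c) * ENNReal.ofReal ((t ^ 2 + p ^ 2) ^ 2)⁻¹ := by
              rw [← ENNReal.ofReal_mul' (by positivity), ← ENNReal.ofReal_mul' (by positivity)]
              congr 1
              field_simp
    _ = ENNReal.ofReal (γ * c * (π / (4 * p ^ 3))) := by
        rw [lintegral_const_mul' _ _ ENNReal.ofReal_ne_top, lintegral_Ioi_inv_sq_add_sq_sq hp0,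
          ← ENNReal.ofReal_mul' (by positivity)]
    _ ≤ ENNReal.ofReal (π * γ / 2) := by
        rw [ENNReal.ofReal_le_ofReal_iff']
        have hrw : γ * c * (π / (4 * p ^ 3)) = π * γ / 2 * (1 - (p ^ 2)⁻¹) := by
          simp only [c]; field_simp; ring
        have h1 : 0 ≤ 1 - (p ^ 2)⁻¹ := sub_nonneg.mpr (inv_le_one_of_one_le₀ (by nlinarith))
        have h2 : 1 - (p ^ 2)⁻¹ ≤ 1 := sub_le_self _ (by positivity)
        rw [hrw]
        rcases le_total 0 γ with hγ | hγ
        · exact Or.inl (mul_le_of_le_one_right (by positivity) h2)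
        · exact Or.inr (mul_nonpos_of_nonpos_of_nonneg (by nlinarith [pi_pos]) h1)

lemma inv_preimage_Ici {t : ℝ} (ht : 0 < t) : Inv.inv ⁻¹' Ici t = Ioc 0 t⁻¹ := by
  ext l
  simp only [mem_preimage, mem_Ici, mem_Ioc]
  constructor
  · intro h
    have hl : 0 < l := inv_pos.mp (ht.trans_le h)
    exact ⟨hl, (le_inv_comm₀ ht hl).mp h⟩
  · rintro ⟨hl, h⟩
    exact (le_inv_comm₀ ht hl).mpr h

theorem lintegral_schoberKernel_le_of_head {ρ : Measure ℝ} {β p : ℝ} (hρ : ∀ᵐ l ∂ρ, 0 < l)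
    (hhead : ∀ ε, 0 < ε → ρ (Ioc 0 ε) ≤ ENNReal.ofReal (β * ε)) (hp0 : 0 < p) (hp : p ≤ 1) :
    ∫⁻ l, ENNReal.ofReal (schoberKernel p l) ∂ρ ≤ ENNReal.ofReal (π * β / 2) := by
  have hmap : ∫⁻ l, ENNReal.ofReal (schoberKernel p l) ∂ρ
      = ∫⁻ l, ENNReal.ofReal (schoberKernel p⁻¹ l) ∂ρ.map Inv.inv := by
    rw [lintegral_map (measurable_schoberKernel _).ennreal_ofReal measurable_inv]
    refine lintegral_congr_ae (hρ.mono fun l hl => ?_)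
    dsimp only
    rw [schoberKernel_inv hp0.ne' hl.ne']
  rw [hmap]
  refine lintegral_schoberKernel_le_of_tail ?_ (fun t ht => ?_) (one_le_inv₀ hp0 |>.mpr hp)
  · exact (ae_map_iff measurable_inv.aemeasurable measurableSet_Ici).mpr
      (hρ.mono fun l hl => (inv_pos.mpr hl).le)
  · rw [Measure.map_apply measurable_inv measurableSet_Ici, inv_preimage_Ici ht, div_eq_mul_inv]
    exact hhead _ (inv_pos.mpr ht)

section schoberMeasure

variable (μ : Measure ℝ)

lemma ae_pos_schoberMeasure : ∀ᵐ l ∂schoberMeasure μ, 0 < l :=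
  (withDensity_absolutelyContinuous _ _).ae_le (ae_restrict_mem measurableSet_Ioi)

lemma schoberMeasure_apply_of_subset {s : Set ℝ} (hs : MeasurableSet s) (hs0 : s ⊆ Ioi 0) :
    schoberMeasure μ s = ∫⁻ l in s, ENNReal.ofReal (1 / (1 + l ^ 2)) ∂μ := by
  rw [schoberMeasure, withDensity_apply _ hs, Measure.restrict_restrict hs, inter_eq_left.mpr hs0]

lemma lintegral_schoberMeasure {f : ℝ → ENNReal} (hf : Measurable f) :
    ∫⁻ l, f l ∂schoberMeasure μ = ∫⁻ l in Ioi 0, ENNReal.ofReal (1 / (1 + l ^ 2)) * f l ∂μ :=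
  lintegral_withDensity_eq_lintegral_mul _ (by fun_prop) hf

end schoberMeasure

lemma ofReal_div_sq_add_sq_le_schoberKernel {p : ℝ} (hp : p ≠ 0) (l : ℝ) :
    ENNReal.ofReal (p / (l ^ 2 + p ^ 2)) ≤ ENNReal.ofReal (1 / (1 + l ^ 2))
      + ENNReal.ofReal (1 / (1 + l ^ 2)) * ENNReal.ofReal (schoberKernel p l) := by
  have hid : p / (l ^ 2 + p ^ 2) = 1 / (1 + l ^ 2) + 1 / (1 + l ^ 2) * schoberKernel p l := by
    unfold schoberKernel
    field_simp
    ring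
  rw [hid, ← ENNReal.ofReal_mul (by positivity)]
  exact ENNReal.ofReal_add_le

theorem schober_symbol_bounded_general
    (μ : Measure ℝ) (β γ : ℝ)
    (h1 : ∀ ε : ℝ, 0 < ε →
      ∫⁻ l in Ioc (0:ℝ) ε, ENNReal.ofReal (1 / (1 + l ^ 2)) ∂μ ≤ ENNReal.ofReal (β * ε))
    (h2 : ∀ t : ℝ, 0 < t →
      ∫⁻ l in Ici t, ENNReal.ofReal (1 / (1 + l ^ 2)) ∂μ ≤ ENNReal.ofReal (γ / t)) :
    ∀ p : ℝ, 0 < p →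
      ∫⁻ l in Ioi (0:ℝ), ENNReal.ofReal (p / (l ^ 2 + p ^ 2)) ∂μ
        ≤ (∫⁻ l in Ioi (0:ℝ), ENNReal.ofReal (1 / (1 + l ^ 2)) ∂μ)
            + ENNReal.ofReal (Real.pi * max β γ / 2) := by
  intro p hp
  have hkernel : ∫⁻ l, ENNReal.ofReal (schoberKernel p l) ∂schoberMeasure μ
      ≤ ENNReal.ofReal (π * max β γ / 2) := by
    rcases le_total 1 p with hp1 | hp1
    · refine (lintegral_schoberKernel_le_of_tail (γ := γ)
        ((ae_pos_schoberMeasure μ).mono fun _ => le_of_lt) (fun t ht => ?_) hp1).trans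
        (ENNReal.ofReal_le_ofReal (by gcongr; exact le_max_right _ _))
      rw [schoberMeasure_apply_of_subset μ measurableSet_Ici fun l hl => ht.trans_le hl]
      exact h2 t ht
    · refine (lintegral_schoberKernel_le_of_head (β := β)
        (ae_pos_schoberMeasure μ) (fun ε hε => ?_) hp hp1).trans
        (ENNReal.ofReal_le_ofReal (by gcongr; exact le_max_left _ _))
      rw [schoberMeasure_apply_of_subset μ measurableSet_Ioc Ioc_subset_Ioi_self]
      exact h1 ε hε
  calc ∫⁻ l in Ioi 0, ENNReal.ofReal (p / (l ^ 2 + p ^ 2)) ∂μ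
      ≤ ∫⁻ l in Ioi 0, ENNReal.ofReal (1 / (1 + l ^ 2))
          + ENNReal.ofReal (1 / (1 + l ^ 2)) * ENNReal.ofReal (schoberKernel p l) ∂μ :=
        lintegral_mono (ofReal_div_sq_add_sq_le_schoberKernel hp.ne')
    _ = (∫⁻ l in Ioi 0, ENNReal.ofReal (1 / (1 + l ^ 2)) ∂μ)
          + ∫⁻ l, ENNReal.ofReal (schoberKernel p l) ∂schoberMeasure μ := by
        rw [lintegral_add_left (by fun_prop),
          lintegral_schoberMeasure μ (measurable_schoberKernel p).ennreal_ofReal]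
    _ ≤ _ := by gcongr

/-- Part 1 of Schober's representation theorem: if the measure
`dρ(λ) = dμ(λ)/(1+λ²)` on `(0,∞)` is finite with `ρ((0,ε]) ≤ βε` and
`ρ([t,∞)) ≤ γ/t`, then `h(p) = (1/π) ∫ p/(λ²+p²) dμ(λ)` satisfies
`|h(p)| ≤ ρ(ℝ₊)/π + max{β,γ}/2` for all `p > 0` (stated here multiplied by `π`). -/
theorem schober_symbol_bounded
    (μ : Measure ℝ) (β γ : ℝ) (hβ : 0 < β) (hγ : 0 < γ)
    (hfin : ∫⁻ l in Ioi (0:ℝ), ENNReal.ofReal (1 / (1 + l ^ 2)) ∂μ < ⊤)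
    (h1 : ∀ ε : ℝ, 0 < ε →
      ∫⁻ l in Ioc (0:ℝ) ε, ENNReal.ofReal (1 / (1 + l ^ 2)) ∂μ ≤ ENNReal.ofReal (β * ε))
    (h2 : ∀ t : ℝ, 0 < t →
      ∫⁻ l in Ici t, ENNReal.ofReal (1 / (1 + l ^ 2)) ∂μ ≤ ENNReal.ofReal (γ / t)) :
    ∀ p : ℝ, 0 < p →
      ∫⁻ l in Ioi (0:ℝ), ENNReal.ofReal (p / (l ^ 2 + p ^ 2)) ∂μ
        ≤ (∫⁻ l in Ioi (0:ℝ), ENNReal.ofReal (1 / (1 + l ^ 2)) ∂μ)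
            + ENNReal.ofReal (Real.pi * max β γ / 2) :=
  schober_symbol_bounded_general μ β γ h1 h2
end

section
/- Let $(S,\sharp)$ be an involutive semigroup, $U_+: S \to B(\mathcal{F})$ a representation, and $H \ge 0$ a positive $U_+$-Hankel operator, i.e. $HU_+(s) = U_+(s^\sharp)^* H$ for $s \in S$. Let $\hat{\mathcal{F}}$ be the Hilbert space completion of $\mathcal{F}/\{\xi : \langle\xi,H\xi\rangle = 0\}$ with respect to $\langle\xi,\eta\rangle_H = \langle\xi,H\eta\rangle$, with quotient map $q$. Then there is a unique map $\hat{U}: S \to B(\hat{\mathcal{F}})$ with $\hat{U}(s)\circ q = q \circ U_+(s)$, it satisfies $\hat{U}(st) = \hat{U}(s)\hat{U}(t)$ and $\hat{U}(s)^* = \hat{U}(s^\sharp)$, and $\|\hat{U}(s)\| \le \max(\|U_+(s)\|, \|U_+(s^\sharp)\|)$ for every $s \in S$. -/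
/-!
Since `⟪q ξ, q η⟫ = ⟪ξ, H η⟫`, the Hankel relation `H U(s) = U(s♯)† H` gives
`‖q (U s ξ)‖² = re ⟪q (U (s♯ s) ξ), q ξ⟫ ≤ ‖q (U (s♯ s) ξ)‖ ‖q ξ‖`. The operator `T = U (s♯ s)` is
`H`-symmetric, so the same inequality applies to all powers `T ^ 2 ^ n`, and iterating it gives
`‖q (T ξ)‖ ^ 2 ^ n ≤ ‖q ξ‖ ^ (2 ^ n - 1) ‖q‖ ‖ξ‖ ‖T‖ ^ 2 ^ n`; taking `2 ^ n`-th roots,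
`‖q (T ξ)‖ ≤ ‖T‖ ‖q ξ‖`, hence `‖q (U s ξ)‖ ≤ max ‖U s‖ ‖U s♯‖ ‖q ξ‖`. So `q ∘ U s` factors
through a bounded operator on the dense range of `q`, which extends uniquely to `G`; the algebraic
identities hold on that dense range.
-/

open ContinuousLinearMap
open scoped InnerProductSpace

theorem pow_two_pow_le_of_sq_le_succ {e : ℕ → ℝ} (h0 : 0 ≤ e 0) (h : ∀ n, e n ^ 2 ≤ e (n + 1))
    (n : ℕ) : e 0 ^ 2 ^ n ≤ e n := by
  induction n with
  | zero => simp
  | succ n ih =>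
    calc e 0 ^ 2 ^ (n + 1) = (e 0 ^ 2 ^ n) ^ 2 := by rw [pow_succ, pow_mul]
      _ ≤ e n ^ 2 := pow_le_pow_left₀ (pow_nonneg h0 _) ih 2
      _ ≤ e (n + 1) := h n

theorem le_one_of_forall_pow_two_pow_le {x B : ℝ} (h : ∀ n, x ^ 2 ^ n ≤ B) : x ≤ 1 := by
  by_contra! hx
  obtain ⟨n, hn⟩ := pow_unbounded_of_one_lt B hx
  exact (h n).not_gt (hn.trans_le (pow_le_pow_right₀ hx.le Nat.lt_two_pow_self.le))

theorem le_mul_of_sq_le_mul_succ_of_le_mul_pow_two_pow {d : ℕ → ℝ} {K C M : ℝ}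
    (hd : ∀ n, 0 ≤ d n) (hK : 0 ≤ K) (hM : 0 ≤ M) (hsq : ∀ n, d n ^ 2 ≤ K * d (n + 1))
    (hbound : ∀ n, d n ≤ C * M ^ 2 ^ n) :
    d 0 ≤ M * K := by
  rcases hK.eq_or_lt with rfl | hK
  · simp [show d 0 = 0 by simpa using hsq 0]
  rcases hM.eq_or_lt with rfl | hM
  · simpa using hbound 0
  have hsq' : ∀ n, (d n / K) ^ 2 ≤ d (n + 1) / K := fun n => by
    rw [div_pow, sq K, ← div_div, div_le_div_iff_of_pos_right hK, div_le_iff₀ hK, mul_comm]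
    exact hsq n
  have hpow : ∀ n, (d 0 / (M * K)) ^ 2 ^ n ≤ C / K := fun n => by
    rw [mul_comm, ← div_div, div_pow, div_le_iff₀ (by positivity), div_mul_eq_mul_div]
    exact (pow_two_pow_le_of_sq_le_succ (div_nonneg (hd 0) hK.le) hsq' n).trans
      (div_le_div_of_nonneg_right (hbound n) hK.le)
  simpa [div_le_one (mul_pos hM hK)] using le_one_of_forall_pow_two_pow_le hpow

theorem ContinuousLinearMap.eq_of_comp_eq_comp_of_denseRange {R M N P : Type*} [Semiring R]
    [TopologicalSpace M] [AddCommMonoid M] [Module R M] [TopologicalSpace N] [AddCommMonoid N]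
    [Module R N] [TopologicalSpace P] [AddCommMonoid P] [Module R P] [T2Space P]
    {q : M →L[R] N} (hq : DenseRange q) {A B : N →L[R] P} (h : A ∘L q = B ∘L q) : A = B :=
  coe_injective <| DFunLike.coe_injective <|
    hq.equalizer A.continuous B.continuous (congrArg DFunLike.coe h)

section Hankel

variable {𝕜 F G : Type*} [RCLike 𝕜] [NormedAddCommGroup F] [InnerProductSpace 𝕜 F]
  [CompleteSpace F] [NormedAddCommGroup G] [InnerProductSpace 𝕜 G] {H T T' : F →L[𝕜] F}
  {q : F →L[𝕜] G}

theorem norm_sq_apply_le_of_comp_eq_adjoint_comp (hinner : ∀ ξ η, ⟪q ξ, q η⟫_𝕜 = ⟪ξ, H η⟫_𝕜)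
    (h : H ∘L T = adjoint T' ∘L H) (ξ : F) : ‖q (T ξ)‖ ^ 2 ≤ ‖q (T' (T ξ))‖ * ‖q ξ‖ := by
  have hswap : ⟪q (T ξ), q (T ξ)⟫_𝕜 = ⟪q (T' (T ξ)), q ξ⟫_𝕜 := by
    rw [hinner, hinner, ← comp_apply H T, h, comp_apply, adjoint_inner_right]
  calc ‖q (T ξ)‖ ^ 2 = RCLike.re ⟪q (T' (T ξ)), q ξ⟫_𝕜 := by rw [← hswap, inner_self_eq_norm_sq]
    _ ≤ ‖⟪q (T' (T ξ)), q ξ⟫_𝕜‖ := RCLike.re_le_norm _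
    _ ≤ ‖q (T' (T ξ))‖ * ‖q ξ‖ := norm_inner_le_norm _ _

theorem norm_apply_le_of_comp_eq_adjoint_comp_self (hinner : ∀ ξ η, ⟪q ξ, q η⟫_𝕜 = ⟪ξ, H η⟫_𝕜)
    (h : H ∘L T = adjoint T ∘L H) (ξ : F) : ‖q (T ξ)‖ ≤ ‖T‖ * ‖q ξ‖ := by
  have hpow : ∀ n, H ∘L T ^ n = adjoint (T ^ n) ∘L H := fun n => by
    rw [← star_eq_adjoint, star_pow]
    exact SemiconjBy.pow_right (x := T) (y := star T) h n
  have key := le_mul_of_sq_le_mul_succ_of_le_mul_pow_two_pow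
    (d := fun n => ‖q ((T ^ 2 ^ n) ξ)‖) (C := ‖q‖ * ‖ξ‖)
    (fun _ => norm_nonneg _) (norm_nonneg (q ξ)) (norm_nonneg T) (fun n => ?_) (fun n => ?_)
  · simpa using key
  · rw [pow_succ 2 n, mul_two, pow_add, mul_apply_eq_comp, mul_comm]
    exact norm_sq_apply_le_of_comp_eq_adjoint_comp hinner (hpow _) ξ
  · calc ‖q ((T ^ 2 ^ n) ξ)‖ ≤ ‖q‖ * (‖T ^ 2 ^ n‖ * ‖ξ‖) := q.le_of_opNorm_le_of_le le_rfl
          ((T ^ 2 ^ n).le_opNorm ξ)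
      _ ≤ ‖q‖ * (‖T‖ ^ 2 ^ n * ‖ξ‖) := by gcongr; exact norm_pow_le' T (by positivity)
      _ = ‖q‖ * ‖ξ‖ * ‖T‖ ^ 2 ^ n := by ring

theorem norm_apply_le_max_mul (hinner : ∀ ξ η, ⟪q ξ, q η⟫_𝕜 = ⟪ξ, H η⟫_𝕜)
    (h : H ∘L T = adjoint T' ∘L H) (h' : H ∘L (T' ∘L T) = adjoint (T' ∘L T) ∘L H) (ξ : F) :
    ‖q (T ξ)‖ ≤ max ‖T‖ ‖T'‖ * ‖q ξ‖ := by
  refine le_of_pow_le_pow_left₀ two_ne_zero (by positivity) ?_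
  calc ‖q (T ξ)‖ ^ 2 ≤ ‖q (T' (T ξ))‖ * ‖q ξ‖ :=
        norm_sq_apply_le_of_comp_eq_adjoint_comp hinner h ξ
    _ ≤ ‖T' ∘L T‖ * ‖q ξ‖ * ‖q ξ‖ := by
        gcongr; exact norm_apply_le_of_comp_eq_adjoint_comp_self hinner h' ξ
    _ ≤ ‖T'‖ * ‖T‖ * ‖q ξ‖ * ‖q ξ‖ := by gcongr; exact opNorm_comp_le T' T
    _ ≤ max ‖T‖ ‖T'‖ * max ‖T‖ ‖T'‖ * ‖q ξ‖ * ‖q ξ‖ := by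
        gcongr
        · exact le_max_right _ _
        · exact le_max_left _ _
    _ = (max ‖T‖ ‖T'‖ * ‖q ξ‖) ^ 2 := by ring

theorem adjoint_eq_of_comp_eq [CompleteSpace G] (hinner : ∀ ξ η, ⟪q ξ, q η⟫_𝕜 = ⟪ξ, H η⟫_𝕜)
    (hq : DenseRange q) {A B : G →L[𝕜] G} (hA : A ∘L q = q ∘L T) (hB : B ∘L q = q ∘L T')
    (h : H ∘L T' = adjoint T ∘L H) : adjoint A = B := by
  refine ((eq_adjoint_iff B A).2 fun x y => ?_).symm
  refine hq.induction_on₂ (p := fun x y => ⟪B x, y⟫_𝕜 = ⟪x, A y⟫_𝕜)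
    (isClosed_eq (by fun_prop) (by fun_prop)) (fun ξ η => ?_) x y
  rw [← comp_apply B q, ← comp_apply A q, hA, hB, comp_apply, comp_apply,
    ← inner_conj_symm (q (T' ξ)), ← inner_conj_symm (q ξ), hinner, hinner, ← comp_apply H T', h,
    comp_apply, adjoint_inner_right]

end Hankel

theorem os_transform_general
    {S : Type*} [Semigroup S] (sharp : S → S)
    (hsharp_mul : ∀ s t : S, sharp (s * t) = sharp t * sharp s)
    (hsharp_inv : ∀ s : S, sharp (sharp s) = s)
    {F G : Type*} [NormedAddCommGroup F] [InnerProductSpace ℂ F] [CompleteSpace F]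
    [NormedAddCommGroup G] [InnerProductSpace ℂ G] [CompleteSpace G]
    (U : S → F →L[ℂ] F) (hU : ∀ s t : S, U (s * t) = (U s).comp (U t))
    (H : F →L[ℂ] F)
    (hHankel : ∀ s : S, H.comp (U s) = (ContinuousLinearMap.adjoint (U (sharp s))).comp H)
    (q : F →L[ℂ] G) (hq : DenseRange q)
    (hinner : ∀ ξ η : F, (inner ℂ (q ξ) (q η) : ℂ) = inner ℂ ξ (H η)) :
    (∃! Uhat : S → G →L[ℂ] G, ∀ s : S, (Uhat s).comp q = q.comp (U s)) ∧
      ∀ Uhat : S → G →L[ℂ] G, (∀ s : S, (Uhat s).comp q = q.comp (U s)) →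
        (∀ s t : S, Uhat (s * t) = (Uhat s).comp (Uhat t)) ∧
        (∀ s : S, ContinuousLinearMap.adjoint (Uhat s) = Uhat (sharp s)) ∧
        (∀ s : S, ‖Uhat s‖ ≤ max ‖U s‖ ‖U (sharp s)‖) := by
  have hbound : ∀ s ξ, ‖q (U s ξ)‖ ≤ max ‖U s‖ ‖U (sharp s)‖ * ‖q ξ‖ := fun s =>
    norm_apply_le_max_mul hinner (hHankel s) (by rw [← hU, hHankel, hsharp_mul, hsharp_inv])
  set Uhat : S → G →L[ℂ] G := fun s => (q ∘L U s).toLinearMap.extendOfNorm q.toLinearMap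
  have hUhat : ∀ s, Uhat s ∘L q = q ∘L U s := fun s =>
    ext fun ξ => LinearMap.extendOfNorm_eq hq ⟨_, hbound s⟩ ξ
  have huniq : ∀ V : S → G →L[ℂ] G, (∀ s, V s ∘L q = q ∘L U s) → V = Uhat := fun V hV =>
    funext fun s => eq_of_comp_eq_comp_of_denseRange hq ((hV s).trans (hUhat s).symm)
  refine ⟨⟨Uhat, hUhat, huniq⟩, fun V hV => ?_⟩
  obtain rfl := huniq V hV
  refine ⟨fun s t => ?_, fun s => ?_, fun s => ?_⟩
  · refine eq_of_comp_eq_comp_of_denseRange hq ?_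
    rw [hUhat (s * t), comp_assoc, hUhat t, ← comp_assoc, hUhat s, hU, comp_assoc]
  · exact adjoint_eq_of_comp_eq hinner hq (hUhat s) (hUhat (sharp s)) (by rw [hHankel, hsharp_inv])
  · exact LinearMap.opNorm_extendOfNorm_le hq (by positivity) (hbound s)

/-- Generalized Osterwalder–Schrader transform: given a representation `U₊` of an
involutive semigroup, a positive `U₊`-Hankel operator `H`, and the Hilbert space
completion `G` of `F` with respect to `⟨ξ,η⟩_H = ⟨ξ,Hη⟩` (with canonical map `q`
of dense range), there is a unique `Û : S → B(G)` with `Û(s) ∘ q = q ∘ U₊(s)`; it is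
multiplicative, satisfies `Û(s)* = Û(s♯)` and `‖Û(s)‖ ≤ max(‖U₊(s)‖, ‖U₊(s♯)‖)`. -/
theorem os_transform
    {S : Type*} [Semigroup S] (sharp : S → S)
    (hsharp_mul : ∀ s t : S, sharp (s * t) = sharp t * sharp s)
    (hsharp_inv : ∀ s : S, sharp (sharp s) = s)
    {F G : Type*} [NormedAddCommGroup F] [InnerProductSpace ℂ F] [CompleteSpace F]
    [NormedAddCommGroup G] [InnerProductSpace ℂ G] [CompleteSpace G]
    (U : S → F →L[ℂ] F) (hU : ∀ s t : S, U (s * t) = (U s).comp (U t))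
    (H : F →L[ℂ] F) (hpos : H.IsPositive)
    (hHankel : ∀ s : S, H.comp (U s) = (ContinuousLinearMap.adjoint (U (sharp s))).comp H)
    (q : F →L[ℂ] G) (hq : DenseRange q)
    (hinner : ∀ ξ η : F, (inner ℂ (q ξ) (q η) : ℂ) = inner ℂ ξ (H η)) :
    (∃! Uhat : S → G →L[ℂ] G, ∀ s : S, (Uhat s).comp q = q.comp (U s)) ∧
      ∀ Uhat : S → G →L[ℂ] G, (∀ s : S, (Uhat s).comp q = q.comp (U s)) →
        (∀ s t : S, Uhat (s * t) = (Uhat s).comp (Uhat t)) ∧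
        (∀ s : S, ContinuousLinearMap.adjoint (Uhat s) = Uhat (sharp s)) ∧
        (∀ s : S, ‖Uhat s‖ ≤ max ‖U s‖ ‖U (sharp s)‖) :=
  os_transform_general sharp hsharp_mul hsharp_inv U hU H hHankel q hq hinner
end
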